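/- arXiv:2506.04110 — 2 statements merged into one kernel-verified Lean document; each statement's English description precedes it below -/
import Mathlib

section
/- Let α be a positive quadratic irrational whose continued fraction expansion is purely periodic, α = [\overline{a_0; a_1, …, a_n}], and for 0 ≤ i ≤ n let α_i = [\overline{a_i; a_{i+1}, …, a_n, a_0, …, a_{i−1}}] be its complete quotients. Then there exists a positive integer D such that each α_i can be written as α_i = (R_i + √D)/S_i with integers R_i, S_i satisfying 1 ≤ R_i ≤ ⌊√D⌋, 1 ≤ S_i ≤ R_i + ⌊√D⌋ ≤ 2⌊√D⌋, and D − R_i² = S_i S_{i−1} for 0 ≤ i ≤ n, where S_{−1} := (D − R_0²)/S_0 is an integer. -/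
open Filter

/-- Partial quotients of the continued fraction expansion: `cfA α n` is `a_n(α)`. -/
noncomputable def cfA : ℝ → ℕ → ℤ
  | α, 0 => ⌊α⌋
  | α, n + 1 => cfA (Int.fract α)⁻¹ n

/-- `M(α) = sup_{n ≥ 1} a_n(α)` as an element of `ℕ∞`. -/
noncomputable def Mq (α : ℝ) : ℕ∞ := ⨆ n : ℕ, ((cfA α (n + 1)).toNat : ℕ∞)

/-- `B(α) = limsup_{n → ∞} a_n(α)` as an element of `ℕ∞`. -/
noncomputable def Bq (α : ℝ) : ℕ∞ := limsup (fun n => ((cfA α n).toNat : ℕ∞)) atTop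

/-- Distance from a real number to the nearest integer. -/
noncomputable def nearestDist (x : ℝ) : ℝ := |x - round x|

/-- Complete quotients of the continued fraction expansion. -/
noncomputable def cq (α : ℝ) : ℕ → ℝ
  | 0 => α
  | n + 1 => (Int.fract (cq α n))⁻¹

/-- Shifted convergent numerators: `cfP α (n+1) = p_n`, `cfP α 0 = p_{-1} = 1`. -/
noncomputable def cfP (α : ℝ) : ℕ → ℤ
  | 0 => 1
  | 1 => ⌊α⌋
  | n + 2 => cfA α (n + 1) * cfP α (n + 1) + cfP α n

/-- Shifted convergent denominators: `cfQ α (n+1) = q_n`, `cfQ α 0 = q_{-1} = 0`. -/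
noncomputable def cfQ (α : ℝ) : ℕ → ℤ
  | 0 => 0
  | 1 => 1
  | n + 2 => cfA α (n + 1) * cfQ α (n + 1) + cfQ α n

/-- Two reals are equivalent if related by an integer Möbius map of determinant `±1`. -/
def CfEquiv (x y : ℝ) : Prop :=
  ∃ a b c d : ℤ, (a * d - b * c = 1 ∨ a * d - b * c = -1) ∧
    y = ((a : ℝ) * x + b) / ((c : ℝ) * x + d)

/-! Write `α = (R₀ + √D) / S₀` with `S₀ ∣ D - R₀²`. The continued fraction algorithm keeps this
shape: `α_{i+1} = (R_{i+1} + √D) / S_{i+1}` with `R_{i+1} = a_i S_i - R_i` and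
`S_i S_{i+1} = D - R_{i+1}²`, while the conjugates `β_i = (R_i - √D) / S_i` obey
`β_{i+1} = 1 / (β_i - a_i)`; since the representation is unique, `(R_i, S_i)` is periodic.
Some `β_j` is negative: otherwise every `β_i - a_i` lies in `(0, 1)`, like `α_i - a_i`, and
`|α_i - β_i|` would grow strictly along a period. Once `β_j < 0`, all later conjugates lie in
`(-1, 0)`, hence by periodicity all of them do, and `α_i > 1 > 0 > β_i > -1` gives the bounds. -/

open Set

lemma cq_add (α : ℝ) (m k : ℕ) : cq α (m + k) = cq (cq α m) k := by
  induction k with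
  | zero => rfl
  | succ k ih => rw [← Nat.add_assoc, cq, ih, cq]

lemma irrational_cq {α : ℝ} (h : Irrational α) (i : ℕ) : Irrational (cq α i) := by
  induction i with
  | zero => exact h
  | succ i ih => exact (ih.sub_intCast ⌊cq α i⌋).inv

lemma cq_sub_floor_mem_Ioo {α : ℝ} (h : Irrational α) (i : ℕ) :
    cq α i - ⌊cq α i⌋ ∈ Ioo 0 1 :=
  ⟨Int.fract_pos.mpr ((irrational_cq h i).ne_int _), Int.fract_lt_one _⟩

lemma one_lt_cq_succ {α : ℝ} (h : Irrational α) (i : ℕ) : 1 < cq α (i + 1) :=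
  (one_lt_inv₀ (cq_sub_floor_mem_Ioo h i).1).mpr (cq_sub_floor_mem_Ioo h i).2

lemma one_lt_cq_of_periodic {α : ℝ} (h : Irrational α) {n : ℕ} (hper : cq α (n + 1) = α) :
    ∀ i, 1 < cq α i
  | 0 => hper ▸ one_lt_cq_succ h n
  | i + 1 => one_lt_cq_succ h i

lemma cq_periodic {α : ℝ} {N : ℕ} (hper : cq α N = α) : Function.Periodic (cq α) N := by
  intro i
  rw [add_comm, cq_add, hper]

section SqrtRepr

variable {D : ℕ} {x : ℝ} {p : ℤ × ℤ}

structure IsSqrtRepr (D : ℕ) (x : ℝ) (p : ℤ × ℤ) : Prop where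
  ne_zero : p.2 ≠ 0
  dvd : p.2 ∣ (D : ℤ) - p.1 ^ 2
  eq : x = (p.1 + √D) / p.2

noncomputable def sqrtConj (D : ℕ) (p : ℤ × ℤ) : ℝ := (p.1 - √D) / p.2

/-- One step of the continued fraction algorithm on `(R, S)`, with partial quotient `a`. -/
def sqrtReprStep (D : ℕ) (a : ℤ) (p : ℤ × ℤ) : ℤ × ℤ :=
  (a * p.2 - p.1, ((D : ℤ) - (a * p.2 - p.1) ^ 2) / p.2)

lemma natCast_sub_sq_ne_zero (hD : Irrational √D) (m : ℤ) : (D : ℤ) - m ^ 2 ≠ 0 := by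
  intro h
  refine irrational_sqrt_natCast_iff.mp hD ⟨m.natAbs, ?_⟩
  rw [← sq]
  exact_mod_cast (sub_eq_zero.mp h).trans (Int.natAbs_sq m).symm

lemma mul_sqrtReprStep_snd (a : ℤ) (h : p.2 ∣ (D : ℤ) - p.1 ^ 2) :
    p.2 * (sqrtReprStep D a p).2 = D - (sqrtReprStep D a p).1 ^ 2 := by
  refine Int.mul_ediv_cancel' ?_
  have : (D : ℤ) - (a * p.2 - p.1) ^ 2 = (D - p.1 ^ 2) + p.2 * (2 * a * p.1 - a ^ 2 * p.2) := by
    ring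
  rw [this]
  exact dvd_add h (dvd_mul_right _ _)

/-- Used both for `t = √D` and for the conjugate `t = -√D`. -/
lemma inv_sub_eq_of_mul_eq (t : ℝ) {a R S R' S' : ℤ} (hS : S ≠ 0) (hS' : S' ≠ 0)
    (hR' : R' = a * S - R) (h : (S : ℝ) * S' = t ^ 2 - R' ^ 2) :
    ((R + t) / S - a)⁻¹ = (R' + t) / S' := by
  have hSr : (S : ℝ) ≠ 0 := Int.cast_ne_zero.mpr hS
  have hS'r : (S' : ℝ) ≠ 0 := Int.cast_ne_zero.mpr hS'
  have hprod : (t - R') * (t + R') = S * S' := by rw [h]; ring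
  have ht : t - R' ≠ 0 := fun h0 => mul_ne_zero hSr hS'r (by rw [← hprod, h0, zero_mul])
  have hsub : (R + t) / S - a = (t - R') / S := by
    rw [hR']; push_cast; field_simp; ring
  rw [hsub, inv_div, div_eq_div_iff ht hS'r]
  linear_combination -hprod

namespace IsSqrtRepr

lemma sqrtReprStep_snd_ne_zero (hD : Irrational √D) (h : IsSqrtRepr D x p) (a : ℤ) :
    (sqrtReprStep D a p).2 ≠ 0 := fun h0 =>
  natCast_sub_sq_ne_zero hD _ (by rw [← mul_sqrtReprStep_snd a h.dvd, h0, mul_zero])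

lemma step (hD : Irrational √D) (h : IsSqrtRepr D x p) :
    IsSqrtRepr D (Int.fract x)⁻¹ (sqrtReprStep D ⌊x⌋ p) where
  ne_zero := h.sqrtReprStep_snd_ne_zero hD ⌊x⌋
  dvd := ⟨p.2, by rw [← mul_sqrtReprStep_snd ⌊x⌋ h.dvd, mul_comm]⟩
  eq := by
    have hinv := inv_sub_eq_of_mul_eq √D h.ne_zero (h.sqrtReprStep_snd_ne_zero hD ⌊x⌋) rfl (by
      rw [Real.sq_sqrt (Nat.cast_nonneg D)]
      exact_mod_cast mul_sqrtReprStep_snd ⌊x⌋ h.dvd)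
    rw [← h.eq] at hinv
    exact hinv

lemma sqrtConj_step (hD : Irrational √D) (h : IsSqrtRepr D x p) :
    sqrtConj D (sqrtReprStep D ⌊x⌋ p) = (sqrtConj D p - ⌊x⌋)⁻¹ := by
  simp only [sqrtConj, sub_eq_add_neg _ √(D : ℝ)]
  refine (inv_sub_eq_of_mul_eq _ h.ne_zero (h.sqrtReprStep_snd_ne_zero hD _) rfl ?_).symm
  rw [neg_sq, Real.sq_sqrt (Nat.cast_nonneg D)]
  exact_mod_cast mul_sqrtReprStep_snd ⌊x⌋ h.dvd

lemma sqrtConj_ne_zero (hD : Irrational √D) (h : IsSqrtRepr D x p) : sqrtConj D p ≠ 0 :=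
  div_ne_zero (sub_ne_zero.mpr (hD.ne_int p.1).symm) (Int.cast_ne_zero.mpr h.ne_zero)

lemma sub_sqrtConj (h : IsSqrtRepr D x p) : x - sqrtConj D p = 2 * √D / p.2 := by
  rw [h.eq, sqrtConj]; ring

lemma add_sqrtConj (h : IsSqrtRepr D x p) : x + sqrtConj D p = 2 * p.1 / p.2 := by
  rw [h.eq, sqrtConj]; ring

lemma ne_sqrtConj (hD : Irrational √D) (h : IsSqrtRepr D x p) : x ≠ sqrtConj D p := by
  rw [← sub_ne_zero, h.sub_sqrtConj]
  exact div_ne_zero (mul_ne_zero two_ne_zero hD.ne_zero) (Int.cast_ne_zero.mpr h.ne_zero)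

lemma unique (hD : Irrational √D) {q : ℤ × ℤ} (hp : IsSqrtRepr D x p) (hq : IsSqrtRepr D x q) :
    p = q := by
  have hp0 : (p.2 : ℝ) ≠ 0 := Int.cast_ne_zero.mpr hp.ne_zero
  have hq0 : (q.2 : ℝ) ≠ 0 := Int.cast_ne_zero.mpr hq.ne_zero
  have h := hp.eq.symm.trans hq.eq
  rw [div_eq_div_iff hp0 hq0] at h
  have hS : p.2 = q.2 := by
    by_contra hne
    refine (hD.intCast_mul (sub_ne_zero.mpr (Ne.symm hne))).ne_int (q.1 * p.2 - p.1 * q.2) ?_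
    push_cast
    linear_combination h
  rw [← hS] at h
  have hR : (p.1 : ℝ) = q.1 := mul_right_cancel₀ hp0 (by linear_combination h)
  exact Prod.ext (by exact_mod_cast hR) hS

lemma bounds (h : IsSqrtRepr D x p) (hx : 1 < x) (hconj : sqrtConj D p ∈ Ioo (-1) 0) :
    (1 ≤ p.1 ∧ p.1 ≤ Nat.sqrt D) ∧ 1 ≤ p.2 ∧ p.2 ≤ p.1 + Nat.sqrt D := by
  have le_sqrt (m : ℤ) (hm : (m : ℝ) < √D) : m ≤ Nat.sqrt D := by
    rw [← Real.floor_real_sqrt_eq_nat_sqrt]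
    exact Int.le_floor.mpr hm.le
  have hS : (0 : ℝ) < p.2 := by
    have := h.sub_sqrtConj
    have : 0 < 2 * √D / p.2 := by linarith [hconj.2]
    rcases div_pos_iff.mp this with ⟨_, h'⟩ | ⟨h', _⟩
    · exact h'
    · linarith [Real.sqrt_nonneg D]
  have hR : (0 : ℝ) < p.1 := by
    have := h.add_sqrtConj
    have : 0 < 2 * (p.1 : ℝ) / p.2 := by linarith [hconj.1]
    linarith [(div_pos_iff_of_pos_right hS).mp this]
  have hRD : (p.1 : ℝ) < √D := by
    have := hconj.2
    rw [sqrtConj, div_neg_iff] at this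
    rcases this with ⟨_, h'⟩ | ⟨h', _⟩ <;> linarith
  have hSD : (p.2 : ℝ) < p.1 + √D := by
    rw [h.eq, one_lt_div hS] at hx
    exact hx
  have hRS := le_sqrt (p.2 - p.1) (by push_cast; linarith)
  refine ⟨⟨by exact_mod_cast hR, le_sqrt _ hRD⟩, by exact_mod_cast hS, by linarith⟩

end IsSqrtRepr

lemma exists_isSqrtRepr {α : ℝ} (hirr : Irrational α) {A B C : ℤ} (hA : A ≠ 0)
    (hα : A * α ^ 2 + B * α + C = 0) :
    ∃ (D : ℕ) (p : ℤ × ℤ), Irrational √D ∧ IsSqrtRepr D α p := by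
  have ht : Irrational (2 * A * α + B) := by
    simpa using (hirr.intCast_mul (m := 2 * A) (by omega)).add_intCast B
  wlog hpos : 0 < 2 * A * α + B generalizing A B C
  · refine this (A := -A) (B := -B) (C := -C) (neg_ne_zero.mpr hA)
      (by push_cast; linear_combination -hα) (by push_cast; simpa [add_comm] using ht.neg) ?_
    push_cast
    linarith [ht.ne_zero.lt_or_gt.resolve_right hpos]
  set t := 2 * A * α + B
  have ht2 : t ^ 2 = ((B ^ 2 - 4 * A * C : ℤ) : ℝ) := by push_cast; linear_combination 4 * A * hα
  obtain ⟨D, hD⟩ := Int.eq_ofNat_of_zero_le (a := B ^ 2 - 4 * A * C) (by exact_mod_cast ht2 ▸ sq_nonneg t)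
  have hsqrt : √D = t := by
    rw [show (D : ℝ) = t ^ 2 by rw [ht2, hD]; rfl, Real.sqrt_sq hpos.le]
  refine ⟨D, (-B, 2 * A), ?_, ⟨by simpa using hA, ⟨-2 * C, by rw [← hD]; ring⟩, ?_⟩⟩
  · rwa [hsqrt]
  · rw [hsqrt]
    field_simp
    push_cast
    ring

end SqrtRepr

/-- The pairs `(R_i, S_i)` of the complete quotients `α_i = (R_i + √D) / S_i`. -/
noncomputable def cqRepr (α : ℝ) (D : ℕ) (p : ℤ × ℤ) : ℕ → ℤ × ℤ
  | 0 => p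
  | i + 1 => sqrtReprStep D ⌊cq α i⌋ (cqRepr α D p i)

section CqRepr

variable {α : ℝ} {D : ℕ} {p : ℤ × ℤ}

lemma isSqrtRepr_cqRepr (hD : Irrational √D) (h : IsSqrtRepr D α p) (i : ℕ) :
    IsSqrtRepr D (cq α i) (cqRepr α D p i) := by
  induction i with
  | zero => exact h
  | succ i ih => exact ih.step hD

lemma cqRepr_periodic (hD : Irrational √D) (h : IsSqrtRepr D α p) {N : ℕ}
    (hper : cq α N = α) : Function.Periodic (cqRepr α D p) N := by
  intro i
  induction i with
  | zero =>
    rw [zero_add]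
    exact ((isSqrtRepr_cqRepr hD h N).unique hD (hper ▸ h) :)
  | succ i ih =>
    rw [Nat.add_right_comm]
    simp only [cqRepr, ih, cq_periodic hper i]

end CqRepr

section Dynamics

variable {x y : ℕ → ℝ} {a : ℕ → ℤ}

lemma abs_sub_lt_abs_inv_sub_inv {u v : ℝ} (hu : u ∈ Ioo 0 1) (hv : v ∈ Ioo 0 1) (huv : u ≠ v) :
    |u - v| < |u⁻¹ - v⁻¹| := by
  have huv0 : 0 < u * v := mul_pos hu.1 hv.1
  have huv1 : u * v < 1 := by nlinarith [hu.2, hv.2, hu.1, hv.1]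
  rw [inv_sub_inv hu.1.ne' hv.1.ne', abs_div, abs_of_pos huv0, abs_sub_comm, lt_div_iff₀ huv0]
  exact mul_lt_of_lt_one_right (abs_pos.mpr (sub_ne_zero.mpr huv.symm)) huv1

/-- Two orbits of the maps `t ↦ 1 / (t - a_i)` staying in the fundamental interval `(a_i, a_i + 1)`
are pushed apart, so they cannot both return to their starting points. -/
lemma exists_neg_of_periodic (hx : ∀ i, x (i + 1) = (x i - a i)⁻¹)
    (hy : ∀ i, y (i + 1) = (y i - a i)⁻¹) (hxa : ∀ i, x i - a i ∈ Ioo 0 1) (ha : ∀ i, 1 ≤ a i)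
    (hy0 : ∀ i, y i ≠ 0) {N : ℕ} (hN : 0 < N) (hxN : x N = x 0) (hyN : y N = y 0)
    (hxy : x 0 ≠ y 0) : ∃ j, y j < 0 := by
  by_contra! hnn
  have hpos i : 0 < y i - a i := inv_pos.mp ((hy i) ▸ (hnn (i + 1)).lt_of_ne' (hy0 (i + 1)))
  have hya i : y i - a i ∈ Ioo 0 1 := by
    refine ⟨hpos i, ?_⟩
    have h1 : 1 < y (i + 1) := by
      have : (1 : ℝ) ≤ a (i + 1) := by exact_mod_cast ha (i + 1)
      linarith [hpos (i + 1)]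
    rw [← inv_inv (y i - a i), ← hy]
    exact inv_lt_one_of_one_lt₀ h1
  have hgrow i (hi : x i ≠ y i) : |x i - y i| < |x (i + 1) - y (i + 1)| := by
    rw [hx, hy, ← sub_sub_sub_cancel_right (x i) (y i) (a i)]
    exact abs_sub_lt_abs_inv_sub_inv (hxa i) (hya i) (fun h => hi (by linarith))
  have hlt : ∀ i, |x 0 - y 0| < |x (i + 1) - y (i + 1)| := by
    intro i
    induction i with
    | zero => exact hgrow 0 hxy
    | succ i ih =>
      refine ih.trans (hgrow _ fun h => ?_)
      rw [h, sub_self, abs_zero] at ih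
      exact (abs_nonneg _).not_gt ih
  obtain ⟨k, rfl⟩ := Nat.exists_eq_add_one_of_ne_zero hN.ne'
  have := hlt k
  rw [hxN, hyN] at this
  exact this.false

lemma mem_Ioo_of_neg (hy : ∀ i, y (i + 1) = (y i - a i)⁻¹) (ha : ∀ i, 1 ≤ a i) {j : ℕ}
    (hj : y j < 0) : y (j + 1) ∈ Ioo (-1) 0 := by
  have hlt : 1 < -(y j - a j) := by
    have : (1 : ℝ) ≤ a j := by exact_mod_cast ha j
    linarith
  rw [hy]
  refine ⟨?_, inv_lt_zero.mpr (by linarith)⟩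
  have := inv_lt_one_of_one_lt₀ hlt
  rw [inv_neg] at this
  linarith

lemma forall_mem_Ioo_of_periodic (hy : ∀ i, y (i + 1) = (y i - a i)⁻¹) (ha : ∀ i, 1 ≤ a i)
    {N : ℕ} (hper : Function.Periodic y N) (hN : 0 < N) {j : ℕ} (hj : y j < 0) :
    ∀ i, y i ∈ Ioo (-1) 0 := by
  have hafter : ∀ k, y (j + 1 + k) ∈ Ioo (-1) 0 := by
    intro k
    induction k with
    | zero => exact mem_Ioo_of_neg hy ha hj
    | succ k ih => exact mem_Ioo_of_neg hy ha ih.2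
  intro i
  have hjN : j + 1 ≤ (j + 1) * N := Nat.le_mul_of_pos_right _ hN
  rw [← hper.nat_mul (j + 1) i]
  obtain ⟨k, hk⟩ := Nat.exists_eq_add_of_le (hjN.trans (Nat.le_add_left _ i))
  push_cast
  rw [hk]
  exact hafter k

end Dynamics

lemma sqrtConj_cqRepr_mem_Ioo {α : ℝ} {D : ℕ} {p : ℤ × ℤ} (hirr : Irrational α)
    (hD : Irrational √D) (h : IsSqrtRepr D α p) {n : ℕ} (hper : cq α (n + 1) = α) (i : ℕ) :
    sqrtConj D (cqRepr α D p i) ∈ Ioo (-1) 0 := by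
  have hrepr := isSqrtRepr_cqRepr hD h
  have hy i : sqrtConj D (cqRepr α D p (i + 1)) = (sqrtConj D (cqRepr α D p i) - ⌊cq α i⌋)⁻¹ :=
    (hrepr i).sqrtConj_step hD
  have ha i : 1 ≤ ⌊cq α i⌋ := Int.le_floor.mpr (by exact_mod_cast (one_lt_cq_of_periodic hirr hper i).le)
  have hyper : Function.Periodic (fun i => sqrtConj D (cqRepr α D p i)) (n + 1) :=
    fun i => congrArg (sqrtConj D) (cqRepr_periodic hD h hper i)
  obtain ⟨j, hj⟩ := exists_neg_of_periodic (x := cq α) (fun _ => rfl) hy (cq_sub_floor_mem_Ioo hirr)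
    ha (fun i => (hrepr i).sqrtConj_ne_zero hD) n.add_one_pos hper (by simpa using hyper 0)
    ((hrepr 0).ne_sqrtConj hD)
  exact forall_mem_Ioo_of_periodic hy ha hyper n.add_one_pos hj i

theorem stmt4_general (α : ℝ) (hirr : Irrational α)
    (hquad : ∃ A B C : ℤ, A ≠ 0 ∧ (A : ℝ) * α ^ 2 + (B : ℝ) * α + (C : ℝ) = 0)
    (n : ℕ) (hper : cq α (n + 1) = α) :
    ∃ (D : ℕ) (R S : ℕ → ℤ) (Sneg : ℤ), 0 < D ∧
      (∀ i ≤ n, cq α i = ((R i : ℝ) + Real.sqrt (D : ℝ)) / (S i : ℝ)) ∧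
      (∀ i ≤ n, 1 ≤ R i ∧ R i ≤ (Nat.sqrt D : ℤ)) ∧
      (∀ i ≤ n, 1 ≤ S i ∧ S i ≤ R i + (Nat.sqrt D : ℤ) ∧
        R i + (Nat.sqrt D : ℤ) ≤ 2 * (Nat.sqrt D : ℤ)) ∧
      ((D : ℤ) - R 0 ^ 2 = S 0 * Sneg) ∧
      (∀ i, 1 ≤ i → i ≤ n → (D : ℤ) - R i ^ 2 = S i * S (i - 1)) := by
  obtain ⟨A, B, C, hA, hα⟩ := hquad
  obtain ⟨D, p, hD, hp⟩ := exists_isSqrtRepr hirr hA hα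
  have hD0 : 0 < D := Nat.pos_of_ne_zero (by rintro rfl; simp at hD)
  have hrepr := isSqrtRepr_cqRepr hD hp
  have hbounds i := (hrepr i).bounds (one_lt_cq_of_periodic hirr hper i)
    (sqrtConj_cqRepr_mem_Ioo hirr hD hp hper i)
  obtain ⟨Sneg, hSneg⟩ := (hrepr 0).dvd
  refine ⟨D, fun i => (cqRepr α D p i).1, fun i => (cqRepr α D p i).2, Sneg, hD0,
    fun i _ => (hrepr i).eq, fun i _ => (hbounds i).1,
    fun i _ => ⟨(hbounds i).2.1, (hbounds i).2.2, by linarith [(hbounds i).1.2]⟩, hSneg, ?_⟩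
  intro i hi _
  obtain ⟨k, rfl⟩ := Nat.exists_eq_add_of_le' hi
  rw [Nat.add_sub_cancel, mul_comm]
  exact (mul_sqrtReprStep_snd _ (hrepr k).dvd).symm

/-- For a positive quadratic irrational `α` with purely periodic continued fraction of
period length `n + 1` (so that the complete quotients satisfy `α_{n+1} = α_0 = α`), there
is a positive integer `D` such that each complete quotient `α_i = (R_i + √D)/S_i` with
integers `1 ≤ R_i ≤ ⌊√D⌋`, `1 ≤ S_i ≤ R_i + ⌊√D⌋ ≤ 2⌊√D⌋` and `D - R_i² = S_i S_{i-1}`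
for `0 ≤ i ≤ n`, where `S_{-1} = (D - R_0²)/S_0` is an integer. -/
theorem stmt4 (α : ℝ) (hpos : 0 < α) (hirr : Irrational α)
    (hquad : ∃ A B C : ℤ, A ≠ 0 ∧ (A : ℝ) * α ^ 2 + (B : ℝ) * α + (C : ℝ) = 0)
    (n : ℕ) (hper : cq α (n + 1) = α) :
    ∃ (D : ℕ) (R S : ℕ → ℤ) (Sneg : ℤ), 0 < D ∧
      (∀ i ≤ n, cq α i = ((R i : ℝ) + Real.sqrt (D : ℝ)) / (S i : ℝ)) ∧
      (∀ i ≤ n, 1 ≤ R i ∧ R i ≤ (Nat.sqrt D : ℤ)) ∧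
      (∀ i ≤ n, 1 ≤ S i ∧ S i ≤ R i + (Nat.sqrt D : ℤ) ∧
        R i + (Nat.sqrt D : ℤ) ≤ 2 * (Nat.sqrt D : ℤ)) ∧
      ((D : ℤ) - R 0 ^ 2 = S 0 * Sneg) ∧
      (∀ i, 1 ≤ i → i ≤ n → (D : ℤ) - R i ^ 2 = S i * S (i - 1)) :=
  stmt4_general α hirr hquad n hper
end

section
/- Let α be a quadratic irrational such that α is equivalent to α/2 and equivalent to (α+1)/2. Then for every integer K ≥ 0 there exists a real irrational β such that β, 2β, 4β, …, 2^K β are all equivalent to α. -/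
open Filter

/-!
The maps `x ↦ x/2` and `x ↦ (x+1)/2` act on Möbius images of `α` through the matrices
`[[1,0],[0,2]]` and `[[1,1],[0,2]]`. If `x = (aα+b)/(cα+d)` with `a` odd, then one of these
matrices can be pulled through to the right: `x/2 = (aγ+m)/(2cγ+d')` with `γ = α/2` or
`γ = (α+1)/2` according to the parity of `b`, so `x/2 ∼ γ ∼ α`. If `a` is even then `c` is odd,
and the same applies to `x + 1 = ((a+c)α + (b+d))/(cα+d)`. Hence every `x ∼ α` has a "half"
`y ∈ {x/2, (x+1)/2}` with `y ∼ α`, and `2y - x` is an integer. Halving `K` times starting from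
`α` gives `β` with every `2^k β` an integer translate of a number equivalent to `α`.
-/

theorem CfEquiv.denom_ne_zero {a b c d : ℤ} (hdet : a * d - b * c = 1 ∨ a * d - b * c = -1)
    {x : ℝ} (hx : Irrational x) : (c : ℝ) * x + d ≠ 0 := by
  intro h
  obtain rfl : c = 0 := by
    by_contra hc
    exact (hx.intCast_mul hc).ne_int (-d) (by push_cast; linarith)
  obtain rfl : d = 0 := by simpa using h
  simp at hdet

theorem div_mobius_eq {x a b c d e f g h : ℝ} (hD : c * x + d ≠ 0) :
    (e * ((a * x + b) / (c * x + d)) + f) / (g * ((a * x + b) / (c * x + d)) + h) =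
      ((e * a + f * c) * x + (e * b + f * d)) / ((g * a + h * c) * x + (g * b + h * d)) := by
  rw [mul_div_assoc', mul_div_assoc', div_add' _ _ _ hD, div_add' _ _ _ hD,
    div_div_div_cancel_right₀ hD]
  congr 1 <;> ring

theorem CfEquiv.refl (x : ℝ) : CfEquiv x x :=
  ⟨1, 0, 0, 1, Or.inl (by norm_num), by simp⟩

theorem CfEquiv.symm {x y : ℝ} (hx : Irrational x) (h : CfEquiv x y) : CfEquiv y x := by
  obtain ⟨a, b, c, d, hdet, rfl⟩ := h
  refine ⟨d, -b, -c, a, by rcases hdet with h | h <;> [left; right] <;> linarith, ?_⟩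
  have hdet' : ((a * d - b * c : ℤ) : ℝ) ≠ 0 := by rcases hdet with h | h <;> simp [h]
  rw [div_mobius_eq (CfEquiv.denom_ne_zero hdet hx)]
  push_cast at hdet' ⊢
  rw [eq_div_iff (by convert hdet' using 1; ring)]
  ring

theorem CfEquiv.irrational {x y : ℝ} (hx : Irrational x) (h : CfEquiv x y) : Irrational y := by
  obtain ⟨a, b, c, d, -, hx'⟩ := h.symm hx
  rintro ⟨q, rfl⟩
  exact hx ⟨(a * q + b) / (c * q + d), by rw [hx']; push_cast; rfl⟩

theorem CfEquiv.trans {x y z : ℝ} (hx : Irrational x) (hxy : CfEquiv x y)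
    (hyz : CfEquiv y z) : CfEquiv x z := by
  obtain ⟨a, b, c, d, hdet, rfl⟩ := hxy
  obtain ⟨e, f, g, h, hdet', rfl⟩ := hyz
  refine ⟨e * a + f * c, e * b + f * d, g * a + h * c, g * b + h * d, ?_, ?_⟩
  · rw [← Int.isUnit_iff] at hdet hdet' ⊢
    convert hdet'.mul hdet using 1
    ring
  · rw [div_mobius_eq (CfEquiv.denom_ne_zero hdet hx)]
    push_cast
    rfl

theorem CfEquiv.add_intCast {x y : ℝ} (hx : Irrational x) (h : CfEquiv x y) (n : ℤ) :
    CfEquiv x (y + n) :=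
  h.trans hx ⟨1, n, 0, 1, Or.inl (by norm_num), by simp⟩

theorem cfEquiv_half_add_half {a b c d t m : ℤ}
    (hdet : a * d - b * c = 1 ∨ a * d - b * c = -1) (hb : b = t * a + 2 * m) (α : ℝ) :
    CfEquiv ((α + t) / 2) (((a * α + b) / (c * α + d)) / 2) := by
  refine ⟨a, m, 2 * c, d - t * c, ?_, ?_⟩
  · convert hdet using 2 <;> rw [hb] <;> ring
  · rw [hb]
    push_cast
    rw [div_div, ← div_div_div_cancel_right₀ (two_ne_zero (α := ℝ))]
    congr 1 <;> ring

section Halving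

variable {α : ℝ} (hirr : Irrational α) (h1 : CfEquiv α (α / 2)) (h2 : CfEquiv α ((α + 1) / 2))
include hirr h1 h2

theorem cfEquiv_half_of_odd {a b c d : ℤ} (hdet : a * d - b * c = 1 ∨ a * d - b * c = -1)
    (ha : Odd a) : CfEquiv α (((a * α + b) / (c * α + d)) / 2) := by
  rcases b.even_or_odd with ⟨m, hm⟩ | ⟨m, hm⟩
  · refine h1.trans hirr ?_
    simpa using cfEquiv_half_add_half hdet (t := 0) (m := m) (by omega) α
  · obtain ⟨n, hn⟩ := ha
    refine h2.trans hirr ?_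
    simpa using cfEquiv_half_add_half hdet (t := 1) (m := m - n) (by omega) α

theorem cfEquiv_half_or_half_add_one {x : ℝ} (hx : CfEquiv α x) :
    CfEquiv α (x / 2) ∨ CfEquiv α ((x + 1) / 2) := by
  obtain ⟨a, b, c, d, hdet, rfl⟩ := hx
  rcases a.even_or_odd with ha | ha
  · have hc : Odd c := by
      by_contra hc
      obtain ⟨u, rfl⟩ := ha
      obtain ⟨v, rfl⟩ := Int.not_odd_iff_even.mp hc
      have : (u + u) * d - b * (v + v) = 2 * (u * d - b * v) := by ring
      omega
    have hx1 : (a * α + b) / (c * α + d) + 1 = ((a + c : ℤ) * α + (b + d : ℤ)) / (c * α + d) := by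
      rw [div_add_one (CfEquiv.denom_ne_zero hdet hirr)]
      push_cast
      ring
    right
    rw [hx1]
    exact cfEquiv_half_of_odd hirr h1 h2 (by convert hdet using 2 <;> ring) (ha.add_odd hc)
  · exact .inl (cfEquiv_half_of_odd hirr h1 h2 hdet ha)

theorem exists_forall_cfEquiv_two_pow_mul (K : ℕ) :
    ∃ β : ℝ, ∀ k ≤ K, CfEquiv α ((2 : ℝ) ^ k * β) := by
  induction K with
  | zero => exact ⟨α, fun k hk => by simpa [Nat.le_zero.mp hk] using CfEquiv.refl α⟩
  | succ K ih =>
    obtain ⟨β, hβ⟩ := ih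
    obtain ⟨γ, n, hγ, hγβ⟩ : ∃ (γ : ℝ) (n : ℤ), CfEquiv α γ ∧ 2 * γ = β + n := by
      rcases cfEquiv_half_or_half_add_one hirr h1 h2 (by simpa using hβ 0 K.zero_le) with h | h
      · exact ⟨_, 0, h, by simp; ring⟩
      · exact ⟨_, 1, h, by simp; ring⟩
    refine ⟨γ, fun k hk => ?_⟩
    cases k with
    | zero => simpa using hγ
    | succ k =>
      have hpow : (2 : ℝ) ^ (k + 1) * γ = 2 ^ k * β + ((2 ^ k * n : ℤ) : ℝ) := by
        push_cast
        rw [pow_succ, mul_assoc, hγβ]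
        ring
      rw [hpow]
      exact (hβ k (by omega)).add_intCast hirr _

end Halving

theorem stmt10_general (α : ℝ) (hirr : Irrational α)
    (h1 : CfEquiv α (α / 2)) (h2 : CfEquiv α ((α + 1) / 2)) :
    ∀ K : ℕ, ∃ β : ℝ, Irrational β ∧ ∀ k ≤ K, CfEquiv ((2 : ℝ) ^ k * β) α := by
  intro K
  obtain ⟨β, hβ⟩ := exists_forall_cfEquiv_two_pow_mul hirr h1 h2 K
  refine ⟨β, by simpa using (hβ 0 K.zero_le).irrational hirr, fun k hk => (hβ k hk).symm hirr⟩

/-- If a quadratic irrational `α` satisfies `α ∼ α/2 ∼ (α+1)/2`, then for every `K ≥ 0`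
there exists an irrational `β` such that `β, 2β, 4β, …, 2^K β` are all equivalent to `α`. -/
theorem stmt10 (α : ℝ) (hirr : Irrational α)
    (hquad : ∃ A B C : ℤ, A ≠ 0 ∧ (A : ℝ) * α ^ 2 + (B : ℝ) * α + (C : ℝ) = 0)
    (h1 : CfEquiv α (α / 2)) (h2 : CfEquiv α ((α + 1) / 2)) :
    ∀ K : ℕ, ∃ β : ℝ, Irrational β ∧ ∀ k ≤ K, CfEquiv ((2 : ℝ) ^ k * β) α :=
  stmt10_general α hirr h1 h2
end
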